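/- Let l ∈ ℕ, let (X₁,d₁), …, (X_l,d_l) be metric spaces, let X = X₁ × ⋯ × X_l with the sup metric d(x,y) = maxᵢ dᵢ(xᵢ,yᵢ), let n, n₁, …, n_l be natural numbers, and suppose (X,d) admits a real-valued n-dimensional control function and each (Xᵢ,dᵢ) admits a real-valued nᵢ-dimensional control function. Then there exists a single function c : [0,∞) → [0,∞), concave, strictly increasing, continuous, unbounded, with c(0) = 0, such that: d' = c ∘ d and dᵢ' = c ∘ dᵢ are metrics; d' equals the sup metric of the metrics dᵢ'; the affine function r ↦ r + 2 is an n-dimensional control function for (X, d'); and for each i the affine function r ↦ r + 2 is an nᵢ-dimensional control function for (Xᵢ, dᵢ'). -/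

import Mathlib

/-!
Let `F` dominate, at the natural numbers, a control function of the product and of every factor.
Take `c` piecewise linear with `c (t k) = k`, whose `k`-th piece has length `g k`, where
`t k = g 0 + ⋯ + g (k - 1)`. If the gaps `g k ≥ 1` are nondecreasing, `c` is concave (it is the
infimum of the lines through its pieces), strictly increasing and `1`-Lipschitz; concavity and
`c 0 = 0` make it subadditive, so `c ∘ d` is again a metric, and monotonicity makes it commute
with the maximum. Choosing moreover `g k ≥ F ⌈t k⌉` gives, for `k = ⌈r⌉` and `s = ⌈t k⌉`:
distance `≥ s` is mapped to `≥ k ≥ r`, while diameters `≤ D s ≤ t (k + 1)` are mapped to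
`≤ k + 1 < r + 2`.
-/

/-- A function `d : X → X → ℝ` is a metric on `X`. -/
def IsMetric {X : Type*} (d : X → X → ℝ) : Prop :=
  (∀ x y, 0 ≤ d x y) ∧ (∀ x y, (d x y = 0 ↔ x = y)) ∧
  (∀ x y, d x y = d y x) ∧ (∀ x y z, d x z ≤ d x y + d y z)

/-- `D` is an `n`-dimensional control function for the space `X` with distance
function `d`. -/
def IsControlFunction {X : Type*} (d : X → X → ℝ) (n : ℕ) (D : ℝ → ℝ) : Prop :=
  ∀ r : ℝ, 0 < r → ∃ 𝒰 : Fin (n + 1) → Set (Set X),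
    (∀ x : X, ∃ i, ∃ U ∈ 𝒰 i, x ∈ U) ∧
    (∀ i, ∀ U ∈ 𝒰 i, ∀ V ∈ 𝒰 i, U ≠ V → ∀ u ∈ U, ∀ v ∈ V, r ≤ d u v) ∧
    (∀ i, ∀ U ∈ 𝒰 i, ∀ u ∈ U, ∀ v ∈ U, d u v ≤ D r)

open Set

section Polygon

variable {g : ℕ → ℝ} {j k : ℕ} {x : ℝ}

noncomputable def knot (g : ℕ → ℝ) (k : ℕ) : ℝ := ∑ i ∈ Finset.range k, g i

noncomputable def chord (g : ℕ → ℝ) (k : ℕ) (x : ℝ) : ℝ := k + (x - knot g k) / g k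

noncomputable def polygon (g : ℕ → ℝ) (x : ℝ) : ℝ := ⨅ k, chord g k x

lemma knot_zero : knot g 0 = 0 := Finset.sum_range_zero g

lemma knot_succ : knot g (k + 1) = knot g k + g k := Finset.sum_range_succ g k

lemma chord_sub_chord (g : ℕ → ℝ) (k : ℕ) (x y : ℝ) :
    chord g k x - chord g k y = (x - y) / g k := by
  unfold chord; ring

lemma chord_knot : chord g k (knot g k) = k := by
  simp [chord]

lemma chord_knot_succ (hk : g k ≠ 0) : chord g k (knot g (k + 1)) = k + 1 := by
  simp [chord, knot_succ, hk]

lemma knot_nonneg (hg : ∀ k, 0 ≤ g k) (k : ℕ) : 0 ≤ knot g k :=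
  Finset.sum_nonneg fun i _ => hg i

lemma nat_le_knot (hg : ∀ k, 1 ≤ g k) (k : ℕ) : (k : ℝ) ≤ knot g k := by
  simpa [knot] using Finset.card_nsmul_le_sum (Finset.range k) g 1 fun i _ => hg i

lemma sub_mul_le_knot_sub (hg : Monotone g) (j k : ℕ) :
    ((k : ℝ) - j) * g j ≤ knot g k - knot g j := by
  rcases le_total j k with h | h
  · have := Finset.card_nsmul_le_sum (Finset.Ico j k) g (g j) fun i hi =>
      hg (Finset.mem_Ico.1 hi).1
    rwa [Finset.sum_Ico_eq_sub g h, Nat.card_Ico, nsmul_eq_mul, Nat.cast_sub h] at this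
  · have := Finset.sum_le_card_nsmul (Finset.Ico k j) g (g j) fun i hi =>
      hg (Finset.mem_Ico.1 hi).2.le
    rw [Finset.sum_Ico_eq_sub g h, Nat.card_Ico, nsmul_eq_mul, Nat.cast_sub h] at this
    unfold knot
    linarith

lemma le_chord_knot (hg : Monotone g) (hj : 0 < g j) (k : ℕ) :
    (k : ℝ) ≤ chord g j (knot g k) := by
  rw [chord, ← sub_le_iff_le_add', le_div_iff₀ hj]
  exact sub_mul_le_knot_sub hg j k

lemma chord_le_chord (hg : Monotone g) (hpos : ∀ k, 0 < g k) (h₁ : knot g k ≤ x)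
    (h₂ : x ≤ knot g (k + 1)) (j : ℕ) : chord g k x ≤ chord g j x := by
  rcases le_or_gt j k with hjk | hkj
  · have hslope : (x - knot g k) / g k ≤ (x - knot g k) / g j :=
      div_le_div_of_nonneg_left (sub_nonneg.2 h₁) (hpos j) (hg hjk)
    linarith [le_chord_knot hg (hpos j) k, chord_sub_chord g j x (knot g k),
      chord_sub_chord g k x (knot g k), chord_knot (g := g) (k := k)]
  · have hslope : (knot g (k + 1) - x) / g j ≤ (knot g (k + 1) - x) / g k :=
      div_le_div_of_nonneg_left (sub_nonneg.2 h₂) (hpos k) (hg hkj.le)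
    have hknot := le_chord_knot hg (hpos j) (k + 1)
    push_cast at hknot
    linarith [chord_sub_chord g j (knot g (k + 1)) x, chord_sub_chord g k (knot g (k + 1)) x,
      chord_knot_succ (hpos k).ne']

lemma exists_knot_le_le_knot_succ (hg : ∀ k, 1 ≤ g k) (hx : 0 ≤ x) :
    ∃ k, knot g k ≤ x ∧ x ≤ knot g (k + 1) := by
  classical
  have hex : ∃ k, x < knot g (k + 1) := by
    refine ⟨⌈x⌉₊, (Nat.le_ceil x).trans_lt ?_⟩
    have := nat_le_knot hg (⌈x⌉₊ + 1)
    push_cast at this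
    linarith
  refine ⟨Nat.find hex, ?_, (Nat.find_spec hex).le⟩
  rcases h : Nat.find hex with _ | k
  · simpa [knot_zero] using hx
  · exact not_lt.1 (Nat.find_min hex (h ▸ k.lt_succ_self))

lemma polygon_eq_chord (hg : Monotone g) (hpos : ∀ k, 0 < g k) (h₁ : knot g k ≤ x)
    (h₂ : x ≤ knot g (k + 1)) : polygon g x = chord g k x :=
  (IsLeast.isGLB ⟨mem_range_self k, forall_mem_range.2 (chord_le_chord hg hpos h₁ h₂)⟩).ciInf_eq

lemma exists_polygon_eq_chord (hg : Monotone g) (hg1 : ∀ k, 1 ≤ g k) (hx : 0 ≤ x) :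
    ∃ k, polygon g x = chord g k x ∧ ∀ j, chord g k x ≤ chord g j x := by
  have hpos k : 0 < g k := one_pos.trans_le (hg1 k)
  obtain ⟨k, h₁, h₂⟩ := exists_knot_le_le_knot_succ hg1 hx
  exact ⟨k, polygon_eq_chord hg hpos h₁ h₂, chord_le_chord hg hpos h₁ h₂⟩

lemma polygon_le_chord (hg : Monotone g) (hg1 : ∀ k, 1 ≤ g k) (hx : 0 ≤ x) (j : ℕ) :
    polygon g x ≤ chord g j x := by
  obtain ⟨k, hk, hmin⟩ := exists_polygon_eq_chord hg hg1 hx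
  exact hk ▸ hmin j

lemma polygon_knot (hg : Monotone g) (hpos : ∀ k, 0 < g k) (k : ℕ) : polygon g (knot g k) = k := by
  rw [polygon_eq_chord hg hpos le_rfl (knot_succ ▸ le_add_of_nonneg_right (hpos k).le), chord_knot]

lemma polygon_zero (hg : Monotone g) (hpos : ∀ k, 0 < g k) : polygon g 0 = 0 := by
  simpa [knot_zero] using polygon_knot hg hpos 0

lemma strictMonoOn_polygon (hg : Monotone g) (hg1 : ∀ k, 1 ≤ g k) :
    StrictMonoOn (polygon g) (Ici 0) := by
  intro x hx y hy hxy
  obtain ⟨k, hk, -⟩ := exists_polygon_eq_chord hg hg1 hy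
  have : 0 < chord g k y - chord g k x := by
    rw [chord_sub_chord]
    exact div_pos (sub_pos.2 hxy) (one_pos.trans_le (hg1 k))
  linarith [polygon_le_chord hg hg1 hx k]

lemma concaveOn_polygon (hg : Monotone g) (hg1 : ∀ k, 1 ≤ g k) :
    ConcaveOn ℝ (Ici 0) (polygon g) := by
  refine ⟨convex_Ici 0, fun x hx y hy a b ha hb hab => ?_⟩
  obtain ⟨k, hk, -⟩ :=
    exists_polygon_eq_chord hg hg1 (convex_Ici 0 hx hy ha hb hab : a • x + b • y ∈ Ici 0)
  have haffine : chord g k (a • x + b • y) = a * chord g k x + b * chord g k y := by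
    have := (one_pos.trans_le (hg1 k)).ne'
    simp only [chord, smul_eq_mul]
    field_simp
    linear_combination (knot g k - k * g k) * hab
  rw [hk, haffine, smul_eq_mul, smul_eq_mul]
  gcongr
  exacts [polygon_le_chord hg hg1 hx k, polygon_le_chord hg hg1 hy k]

lemma lipschitzOnWith_polygon (hg : Monotone g) (hg1 : ∀ k, 1 ≤ g k) :
    LipschitzOnWith 1 (polygon g) (Ici 0) := by
  refine LipschitzOnWith.of_le_add fun x hx y hy => ?_
  obtain ⟨k, hk, -⟩ := exists_polygon_eq_chord hg hg1 hy
  have hslope : (x - y) / g k ≤ dist x y :=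
    (div_le_div_of_nonneg_right (le_abs_self _) (one_pos.trans_le (hg1 k)).le).trans
      (div_le_self (abs_nonneg _) (hg1 k))
  linarith [polygon_le_chord hg hg1 hx k, chord_sub_chord g k x y]

lemma nat_le_polygon_of_knot_le (hg : Monotone g) (hg1 : ∀ k, 1 ≤ g k) (hx : knot g k ≤ x) :
    (k : ℝ) ≤ polygon g x := by
  have hpos k : 0 < g k := one_pos.trans_le (hg1 k)
  have hknot : 0 ≤ knot g k := knot_nonneg (fun k => (hpos k).le) k
  calc (k : ℝ) = polygon g (knot g k) := (polygon_knot hg hpos k).symm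
    _ ≤ polygon g x := (strictMonoOn_polygon hg hg1).monotoneOn hknot (hknot.trans hx) hx

lemma polygon_le_nat_of_le_knot (hg : Monotone g) (hg1 : ∀ k, 1 ≤ g k) (hx₀ : 0 ≤ x)
    (hx : x ≤ knot g k) : polygon g x ≤ k := by
  have hpos k : 0 < g k := one_pos.trans_le (hg1 k)
  calc polygon g x ≤ polygon g (knot g k) :=
        (strictMonoOn_polygon hg hg1).monotoneOn hx₀ (hx₀.trans hx) hx
    _ = k := polygon_knot hg hpos k

lemma polygon_nonneg (hg : Monotone g) (hg1 : ∀ k, 1 ≤ g k) (hx : 0 ≤ x) : 0 ≤ polygon g x := by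
  simpa using nat_le_polygon_of_knot_le hg hg1 (k := 0) (knot_zero ▸ hx)

end Polygon

section AdaptedGaps

variable {F : ℕ → ℝ} {k : ℕ}

/-- The pairs `(t k, g k)` of knot and gap, with `g` nondecreasing and `g k ≥ max 1 (F ⌈t k⌉)`. -/
noncomputable def adaptedGapsAux (F : ℕ → ℝ) : ℕ → ℝ × ℝ
  | 0 => (0, max 1 (F 0))
  | k + 1 =>
    let p := adaptedGapsAux F k
    (p.1 + p.2, max p.2 (F ⌈p.1 + p.2⌉₊))

noncomputable def adaptedGaps (F : ℕ → ℝ) (k : ℕ) : ℝ := (adaptedGapsAux F k).2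

lemma knot_adaptedGaps (F : ℕ → ℝ) (k : ℕ) : knot (adaptedGaps F) k = (adaptedGapsAux F k).1 := by
  induction k with
  | zero => simp [knot_zero, adaptedGapsAux]
  | succ k ih => rw [knot_succ, ih]; rfl

lemma adaptedGaps_succ :
    adaptedGaps F (k + 1) = max (adaptedGaps F k) (F ⌈knot (adaptedGaps F) (k + 1)⌉₊) := by
  rw [knot_adaptedGaps]; rfl

lemma monotone_adaptedGaps : Monotone (adaptedGaps F) :=
  monotone_nat_of_le_succ fun _ => adaptedGaps_succ ▸ le_max_left _ _

lemma one_le_adaptedGaps (k : ℕ) : 1 ≤ adaptedGaps F k :=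
  (le_max_left 1 (F 0)).trans (monotone_adaptedGaps k.zero_le)

lemma le_adaptedGaps : F ⌈knot (adaptedGaps F) k⌉₊ ≤ adaptedGaps F k := by
  cases k with
  | zero => rw [knot_zero, Nat.ceil_zero]; exact le_max_right 1 (F 0)
  | succ k => exact adaptedGaps_succ ▸ le_max_right _ _

lemma polygon_adaptedGaps_control {D : ℝ → ℝ} (hDF : ∀ m : ℕ, D m ≤ F m) {r : ℝ} (hr : 0 < r) :
    ∃ s, 0 < s ∧ (∀ x, s ≤ x → r ≤ polygon (adaptedGaps F) x) ∧
      ∀ x, 0 ≤ x → x ≤ D s → polygon (adaptedGaps F) x ≤ r + 2 := by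
  set g := adaptedGaps F
  set k := ⌈r⌉₊
  have hk : r ≤ k := Nat.le_ceil r
  have hknot : (k : ℝ) ≤ knot g k := nat_le_knot one_le_adaptedGaps k
  have hk₀ : 0 < knot g k := (hr.trans_le hk).trans_le hknot
  refine ⟨⌈knot g k⌉₊, by positivity, fun x hx => ?_, fun x hx₀ hx => ?_⟩
  · exact hk.trans <| nat_le_polygon_of_knot_le monotone_adaptedGaps one_le_adaptedGaps
      ((Nat.le_ceil _).trans hx)
  · have hx' : x ≤ knot g (k + 1) := by
      rw [knot_succ]
      linarith [hDF ⌈knot g k⌉₊, le_adaptedGaps (F := F) (k := k)]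
    have := polygon_le_nat_of_le_knot monotone_adaptedGaps one_le_adaptedGaps hx₀ hx'
    push_cast at this
    linarith [Nat.ceil_lt_add_one hr.le]

end AdaptedGaps

lemma ConcaveOn.map_add_le {f : ℝ → ℝ} (hf : ConcaveOn ℝ (Ici 0) f) (hf₀ : 0 ≤ f 0) {a b : ℝ}
    (ha : 0 ≤ a) (hb : 0 ≤ b) : f (a + b) ≤ f a + f b := by
  obtain hab | hab := (add_nonneg ha hb).eq_or_lt
  · obtain ⟨rfl, rfl⟩ : a = 0 ∧ b = 0 := ⟨by linarith, by linarith⟩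
    simpa using hf₀
  have hscale x (hx : 0 ≤ x) (hxab : x ≤ a + b) : x / (a + b) * f (a + b) ≤ f x := by
    have := hf.2 self_mem_Ici (mem_Ici.2 hab.le) (sub_nonneg.2 ((div_le_one hab).2 hxab))
      (div_nonneg hx hab.le) (sub_add_cancel 1 _)
    simp only [smul_eq_mul, mul_zero, zero_add, div_mul_cancel₀ x hab.ne'] at this
    nlinarith [mul_nonneg (sub_nonneg.2 ((div_le_one hab).2 hxab)) hf₀]
  calc f (a + b) = a / (a + b) * f (a + b) + b / (a + b) * f (a + b) := by field_simp
    _ ≤ f a + f b := add_le_add (hscale a ha (by linarith)) (hscale b hb (by linarith))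

lemma IsMetric.comp {X : Type*} {d : X → X → ℝ} (hd : IsMetric d) {c : ℝ → ℝ} (hc₀ : c 0 = 0)
    (hc : StrictMonoOn c (Ici 0)) (hadd : ∀ a b, 0 ≤ a → 0 ≤ b → c (a + b) ≤ c a + c b) :
    IsMetric fun x y => c (d x y) := by
  obtain ⟨hnonneg, hzero, hsymm, htri⟩ := hd
  refine ⟨fun x y => hc₀ ▸ hc.monotoneOn self_mem_Ici (hnonneg x y) (hnonneg x y),
    fun x y => ?_, fun x y => congrArg c (hsymm x y), fun x y z => ?_⟩
  · rw [← hzero, ← hc.injOn.eq_iff (hnonneg x y) self_mem_Ici, hc₀]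
  · calc c (d x z) ≤ c (d x y + d y z) :=
          hc.monotoneOn (hnonneg x z) (add_nonneg (hnonneg x y) (hnonneg y z)) (htri x y z)
      _ ≤ c (d x y) + c (d y z) := hadd _ _ (hnonneg x y) (hnonneg y z)

lemma IsMetric.iSup {ι : Type*} [Finite ι] {X : ι → Type*} {d : ∀ i, X i → X i → ℝ}
    (hd : ∀ i, IsMetric (d i)) : IsMetric fun x y : ∀ i, X i => ⨆ i, d i (x i) (y i) := by
  have hle (x y : ∀ i, X i) i : d i (x i) (y i) ≤ ⨆ i, d i (x i) (y i) :=
    le_ciSup (f := fun i => d i (x i) (y i)) (Finite.bddAbove_range _) i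
  have hnonneg (x y : ∀ i, X i) : 0 ≤ ⨆ i, d i (x i) (y i) :=
    Real.iSup_nonneg fun i => (hd i).1 _ _
  refine ⟨hnonneg, fun x y => ⟨fun h => funext fun i => ?_, ?_⟩, fun x y => ?_, fun x y z => ?_⟩
  · exact ((hd i).2.1 _ _).1 (le_antisymm (h ▸ hle x y i) ((hd i).1 _ _))
  · rintro rfl
    exact le_antisymm (Real.iSup_le (fun i => (((hd i).2.1 _ _).2 rfl).le) le_rfl) (hnonneg x x)
  · simp only [(hd _).2.2.1 (x _)]
  · exact Real.iSup_le (fun i => ((hd i).2.2.2 _ _ _).trans (add_le_add (hle x y i) (hle y z i)))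
      (add_nonneg (hnonneg x y) (hnonneg y z))

lemma MonotoneOn.map_iSup_of_nonneg {ι : Type*} [Finite ι] {c : ℝ → ℝ}
    (hc : MonotoneOn c (Ici 0)) (hc₀ : c 0 = 0) {f : ι → ℝ} (hf : ∀ i, 0 ≤ f i) :
    c (⨆ i, f i) = ⨆ i, c (f i) := by
  rcases isEmpty_or_nonempty ι with hι | hι
  · simp [Real.iSup_of_isEmpty, hc₀]
  obtain ⟨i₀, hi₀⟩ := exists_eq_ciSup_of_finite (f := f)
  rw [← hi₀]
  refine le_antisymm (le_ciSup (f := fun i => c (f i)) (Finite.bddAbove_range _) i₀)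
    (ciSup_le fun i => ?_)
  exact hc (hf i) (hf i₀) (hi₀ ▸ le_ciSup (Finite.bddAbove_range f) i)

lemma IsControlFunction.comp {X : Type*} {d : X → X → ℝ} {n : ℕ} {D E c : ℝ → ℝ}
    (hD : IsControlFunction d n D) (hd : ∀ x y, 0 ≤ d x y)
    (hc : ∀ r, 0 < r → ∃ s, 0 < s ∧ (∀ x, s ≤ x → r ≤ c x) ∧ ∀ x, 0 ≤ x → x ≤ D s → c x ≤ E r) :
    IsControlFunction (fun x y => c (d x y)) n E := by
  intro r hr
  obtain ⟨s, hs, hlarge, hsmall⟩ := hc r hr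
  obtain ⟨𝒰, hcover, hdisj, hdiam⟩ := hD s hs
  exact ⟨𝒰, hcover, fun i U hU V hV hUV u hu v hv => hlarge _ (hdisj i U hU V hV hUV u hu v hv),
    fun i U hU u hu v hv => hsmall _ (hd u v) (hdiam i U hU u hu v hv)⟩

theorem stmt_10 (l : ℕ) (X : Fin l → Type*)
    (d : ∀ i, X i → X i → ℝ) (hmet : ∀ i, IsMetric (d i))
    (n : ℕ) (nn : Fin l → ℕ)
    (hprod : ∃ D : ℝ → ℝ,
      IsControlFunction (fun x y : ∀ i, X i => ⨆ i, d i (x i) (y i)) n D)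
    (hfac : ∀ i, ∃ D : ℝ → ℝ, IsControlFunction (d i) (nn i) D) :
    ∃ c : ℝ → ℝ,
      (∀ r, 0 ≤ r → 0 ≤ c r) ∧
      ConcaveOn ℝ (Set.Ici (0 : ℝ)) c ∧
      StrictMonoOn c (Set.Ici (0 : ℝ)) ∧
      ContinuousOn c (Set.Ici (0 : ℝ)) ∧
      (∀ M : ℝ, ∃ r, 0 ≤ r ∧ M ≤ c r) ∧
      c 0 = 0 ∧
      IsMetric (fun x y : ∀ i, X i => c (⨆ i, d i (x i) (y i))) ∧
      (∀ i, IsMetric (fun a b : X i => c (d i a b))) ∧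
      (∀ x y : ∀ i, X i, c (⨆ i, d i (x i) (y i)) = ⨆ i, c (d i (x i) (y i))) ∧
      IsControlFunction (fun x y : ∀ i, X i => c (⨆ i, d i (x i) (y i))) n
        (fun r => r + 2) ∧
      (∀ i, IsControlFunction (fun a b : X i => c (d i a b)) (nn i)
        (fun r => r + 2)) := by
  obtain ⟨D₀, hD₀⟩ := hprod
  choose D hD using hfac
  set F : ℕ → ℝ := fun m => max (D₀ m) (⨆ i, D i m)
  have hD₀F (m : ℕ) : D₀ m ≤ F m := le_max_left _ _
  have hDF i (m : ℕ) : D i m ≤ F m :=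
    (le_ciSup (f := fun i => D i m) (Finite.bddAbove_range _) i).trans (le_max_right _ _)
  have hg := monotone_adaptedGaps (F := F)
  have hg1 := one_le_adaptedGaps (F := F)
  have hc₀ := polygon_zero hg fun k => one_pos.trans_le (hg1 k)
  have hmono := strictMonoOn_polygon hg hg1
  have hconc := concaveOn_polygon hg hg1
  have hadd a b (ha : 0 ≤ a) (hb : 0 ≤ b) := hconc.map_add_le hc₀.ge ha hb
  have hsup := IsMetric.iSup hmet
  refine ⟨polygon (adaptedGaps F), fun r hr => polygon_nonneg hg hg1 hr, hconc, hmono,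
    (lipschitzOnWith_polygon hg hg1).continuousOn,
    fun M => ⟨_, knot_nonneg (fun k => zero_le_one.trans (hg1 k)) ⌈M⌉₊,
      (Nat.le_ceil M).trans (nat_le_polygon_of_knot_le hg hg1 le_rfl)⟩,
    hc₀, hsup.comp hc₀ hmono hadd, fun i => (hmet i).comp hc₀ hmono hadd,
    fun x y => hmono.monotoneOn.map_iSup_of_nonneg hc₀ fun i => (hmet i).1 _ _,
    hD₀.comp hsup.1 fun r hr => polygon_adaptedGaps_control hD₀F hr,
    fun i => (hD i).comp (hmet i).1 fun r hr => polygon_adaptedGaps_control (hDF i) hr⟩
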